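/- Let a ∈ ℝ and define F, G : ℝ³ → ℝ by F(x, y, z) = −(a² x² − y²)/2 − (1 − a²)/2 and G(x, y, z) = −a x y (so that F + iG = −½(a x + i y)² − ½(1 − a²)). Then for every p = (x, y, z) ∈ ℝ³, the scalar triple product ⟨p, ∇F(p) × ∇G(p)⟩ equals a z (a² x² + y²), where ∇ denotes the gradient and × the cross product in ℝ³. -/
import Mathlib

open scoped RealInnerProductSpace

private lemma grad_of' (f : EuclideanSpace ℝ (Fin 3) → ℝ) (p v : EuclideanSpace ℝ (Fin 3))
    (h : HasFDerivAt f (InnerProductSpace.toDual ℝ (EuclideanSpace ℝ (Fin 3)) v) p) :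
    gradient f p = v :=
  HasGradientAt.gradient ((hasGradientAt_iff_hasFDerivAt).2 h)

private lemma gradF (a : ℝ) (p : EuclideanSpace ℝ (Fin 3)) :
    gradient (fun q : EuclideanSpace ℝ (Fin 3) =>
        -((a ^ 2 * (q 0) ^ 2 - (q 1) ^ 2)) / 2 - (1 - a ^ 2) / 2) p
      = (WithLp.equiv 2 (Fin 3 → ℝ)).symm ![-(a ^ 2 * p 0), p 1, 0] := by
  apply grad_of'
  have h0 := (EuclideanSpace.proj (0 : Fin 3) (𝕜 := ℝ)).hasFDerivAt (x := p)
  have h1 := (EuclideanSpace.proj (1 : Fin 3) (𝕜 := ℝ)).hasFDerivAt (x := p)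
  have h := ((((h0.mul h0).const_mul (a ^ 2)).sub (h1.mul h1)).neg.mul_const (2:ℝ)⁻¹).sub_const
      ((1 - a ^ 2) / 2)
  have hL : (InnerProductSpace.toDual ℝ (EuclideanSpace ℝ (Fin 3)))
        ((WithLp.equiv 2 (Fin 3 → ℝ)).symm ![-(a ^ 2 * p 0), p 1, 0]) =
      (2:ℝ)⁻¹ • -(a ^ 2 • ((EuclideanSpace.proj (0:Fin 3) (𝕜 := ℝ)) p • EuclideanSpace.proj 0
          + (EuclideanSpace.proj (0:Fin 3) (𝕜 := ℝ)) p • EuclideanSpace.proj 0) -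
        ((EuclideanSpace.proj (1:Fin 3) (𝕜 := ℝ)) p • EuclideanSpace.proj 1
          + (EuclideanSpace.proj (1:Fin 3) (𝕜 := ℝ)) p • EuclideanSpace.proj 1)) := by
    ext w
    simp [InnerProductSpace.toDual_apply_apply, PiLp.inner_apply, Fin.sum_univ_three,
      EuclideanSpace.proj]
    ring
  refine HasFDerivAt.congr_of_eventuallyEq (hL ▸ h) (Filter.Eventually.of_forall fun q => ?_)
  simp [EuclideanSpace.proj]
  ring

private lemma gradG (a : ℝ) (p : EuclideanSpace ℝ (Fin 3)) :
    gradient (fun q : EuclideanSpace ℝ (Fin 3) => -(a * q 0 * q 1)) p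
      = (WithLp.equiv 2 (Fin 3 → ℝ)).symm ![-(a * p 1), -(a * p 0), 0] := by
  apply grad_of'
  have h0 := (EuclideanSpace.proj (0 : Fin 3) (𝕜 := ℝ)).hasFDerivAt (x := p)
  have h1 := (EuclideanSpace.proj (1 : Fin 3) (𝕜 := ℝ)).hasFDerivAt (x := p)
  have h := ((h0.const_mul a).mul h1).neg
  have hL : (InnerProductSpace.toDual ℝ (EuclideanSpace ℝ (Fin 3)))
        ((WithLp.equiv 2 (Fin 3 → ℝ)).symm ![-(a * p 1), -(a * p 0), 0]) =
      -((a * (EuclideanSpace.proj (0:Fin 3) (𝕜 := ℝ)) p) • EuclideanSpace.proj 1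
        + (EuclideanSpace.proj (1:Fin 3) (𝕜 := ℝ)) p • (a • EuclideanSpace.proj 0)) := by
    ext w
    simp [InnerProductSpace.toDual_apply_apply, PiLp.inner_apply, Fin.sum_univ_three,
      EuclideanSpace.proj]
    ring
  refine HasFDerivAt.congr_of_eventuallyEq (hL ▸ h) (Filter.Eventually.of_forall fun q => ?_)
  simp [EuclideanSpace.proj]

open scoped RealInnerProductSpace in
/-- For `F = −(a²x² − y²)/2 − (1 − a²)/2` and `G = −axy` (so `F + iG = −½(ax+iy)² − ½(1−a²)`),
the scalar triple product `⟨p, ∇F(p) × ∇G(p)⟩` equals `a z (a²x² + y²)` at every `p ∈ ℝ³`. -/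
theorem stmt13 (a : ℝ) (F G : EuclideanSpace ℝ (Fin 3) → ℝ)
    (hF : ∀ p : EuclideanSpace ℝ (Fin 3),
      F p = -((a ^ 2 * (p 0) ^ 2 - (p 1) ^ 2)) / 2 - (1 - a ^ 2) / 2)
    (hG : ∀ p : EuclideanSpace ℝ (Fin 3), G p = -(a * p 0 * p 1)) :
    ∀ p : EuclideanSpace ℝ (Fin 3),
      ⟪p, (WithLp.equiv 2 (Fin 3 → ℝ)).symm
          (crossProduct (WithLp.equiv 2 (Fin 3 → ℝ) (gradient F p))
            (WithLp.equiv 2 (Fin 3 → ℝ) (gradient G p)))⟫ =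
        a * p 2 * (a ^ 2 * (p 0) ^ 2 + (p 1) ^ 2) := by
  intro p
  have hFe : F = fun q : EuclideanSpace ℝ (Fin 3) =>
      -((a ^ 2 * (q 0) ^ 2 - (q 1) ^ 2)) / 2 - (1 - a ^ 2) / 2 := funext hF
  have hGe : G = fun q : EuclideanSpace ℝ (Fin 3) => -(a * q 0 * q 1) := funext hG
  rw [hFe, hGe, gradF, gradG]
  simp [PiLp.inner_apply, Fin.sum_univ_three, cross_apply]
  ring
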